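/- arXiv:2303.06058 — 4 statements merged into one kernel-verified Lean document; each statement's English description precedes it below -/
import Mathlib

section
/- If v ≤ V(x) ≤ V for all x in [μ, μ'] in a single-parameter exponential family (where V(x) is the variance at mean x), then (μ' − μ)²/(2V) ≤ kl(μ, μ') ≤ (μ' − μ)²/(2v) for μ ≤ μ'. -/
open MeasureTheory intervalIntegral

lemma aux_int (μ μ' c : ℝ) (_hc : c ≠ 0) :
    (∫ x in μ..μ', (x - μ) / c) = (μ' - μ) ^ 2 / (2 * c) := by
  have : (∫ x in μ..μ', (x - μ) / c) = (∫ x in μ..μ', (x - μ)) / c := by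
    rw [← intervalIntegral.integral_div]
  rw [this]
  have h2 : (∫ x in μ..μ', (x - μ)) = (μ' - μ) ^ 2 / 2 := by
    rw [intervalIntegral.integral_comp_sub_right (fun x => x) μ, integral_id]
    ring
  rw [h2]; ring

/-- If `v ≤ V(x) ≤ Vmax` on `[μ, μ']` in a single-parameter exponential family whose
KL divergence satisfies the integral representation `kl(μ, μ') = ∫_μ^{μ'} (x-μ)/V(x) dx`,
then `(μ'-μ)²/(2 Vmax) ≤ kl(μ, μ') ≤ (μ'-μ)²/(2 v)`. -/
theorem stmt2 (V : ℝ → ℝ) (hVcont : Continuous V) (kl : ℝ → ℝ → ℝ)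
    (μ μ' v Vmax : ℝ) (hle : μ ≤ μ') (hv : 0 < v)
    (hbounds : ∀ x ∈ Set.Icc μ μ', v ≤ V x ∧ V x ≤ Vmax)
    (hkl : kl μ μ' = ∫ x in μ..μ', (x - μ) / V x) :
    (μ' - μ) ^ 2 / (2 * Vmax) ≤ kl μ μ' ∧ kl μ μ' ≤ (μ' - μ) ^ 2 / (2 * v) := by
  have hVpos : ∀ x ∈ Set.Icc μ μ', 0 < V x := fun x hx => lt_of_lt_of_le hv (hbounds x hx).1
  have hVmax : 0 < Vmax := lt_of_lt_of_le (hVpos μ (Set.left_mem_Icc.mpr hle)) (hbounds μ (Set.left_mem_Icc.mpr hle)).2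
  have hint : IntervalIntegrable (fun x => (x - μ) / V x) volume μ μ' := by
    apply ContinuousOn.intervalIntegrable
    rw [Set.uIcc_of_le hle]
    exact ContinuousOn.div (by fun_prop) hVcont.continuousOn
      (fun x hx => (hVpos x hx).ne')
  have hint1 : IntervalIntegrable (fun x => (x - μ) / Vmax) volume μ μ' := by
    apply ContinuousOn.intervalIntegrable; fun_prop
  have hint2 : IntervalIntegrable (fun x => (x - μ) / v) volume μ μ' := by
    apply ContinuousOn.intervalIntegrable; fun_prop
  constructor
  · rw [hkl, ← aux_int μ μ' Vmax hVmax.ne']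
    apply intervalIntegral.integral_mono_on hle hint1 hint
    intro x hx
    have hx0 : 0 ≤ x - μ := by linarith [hx.1]
    gcongr
    exacts [hVpos x hx, (hbounds x hx).2]
  · rw [hkl, ← aux_int μ μ' v hv.ne']
    apply intervalIntegral.integral_mono_on hle hint hint2
    intro x hx
    have hx0 : 0 ≤ x - μ := by linarith [hx.1]
    gcongr
    exact (hbounds x hx).1
end

section
/- Let X_1,...,X_{n+1} be fixed reals and Z_1,...,Z_{n+1} fixed reals, with F_{n+1} their joint empirical distribution. Let (w_1,...,w_{n+1}) be a uniform random point of the (n+1)-simplex (i.e., Dirichlet(1,...,1)). Then for any α, β ≥ 0 such that 1 − α(X_i − μ) − β(B − Z_i) ≥ 0 for all i, P(∑ w_i X_i ≥ μ and ∑ w_i Z_i ≤ B) ≤ ∏_{i=1}^{n+1} 1/(1 − α(X_i − μ) − β(B − Z_i)) = exp(−(n+1) E_{F_{n+1}}[log(1 − α(X − μ) − β(B − Z))]). -/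
/-!
Write the Dirichlet weights as `wᵢ = Rᵢ / ∑ⱼ Rⱼ` with `Rᵢ` i.i.d. `Exp(1)`, almost surely
positive. Clearing the positive denominator, the event forces `0 ≤ ∑ᵢ cᵢ Rᵢ` with
`cᵢ = α (Xᵢ - μ) + β (B - Zᵢ) < 1`. Chernoff's bound at `t = 1` and independence then give
`P ≤ ∏ᵢ E[exp (cᵢ Rᵢ)] = ∏ᵢ 1 / (1 - cᵢ)`.
-/

open MeasureTheory ProbabilityTheory Real Set

namespace ProbabilityTheory

lemma exponentialPDF_mul_ofReal_exp (r t x : ℝ) :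
    exponentialPDF r x * ENNReal.ofReal (exp (t * x)) =
      (Ici 0).indicator (fun x ↦ ENNReal.ofReal (r * exp ((t - r) * x))) x := by
  rcases lt_or_ge x 0 with hx | hx
  · simp [exponentialPDF_of_neg hx, notMem_Ici.2 hx]
  · rw [exponentialPDF_of_nonneg hx, indicator_of_mem (mem_Ici.2 hx), ← ENNReal.ofReal_mul',
      mul_assoc, ← exp_add]
    · ring_nf
    · positivity

lemma lintegral_exp_mul_expMeasure {r t : ℝ} (hr : 0 < r) (ht : t < r) :
    ∫⁻ x, ENNReal.ofReal (exp (t * x)) ∂expMeasure r = ENNReal.ofReal (r / (r - t)) := by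
  have hneg : t - r < 0 := by linarith
  have hint : IntegrableOn (fun x ↦ r * exp ((t - r) * x)) (Ioi 0) :=
    (integrableOn_exp_mul_Ioi hneg 0).const_mul r
  have hpdf : Measurable (exponentialPDF r) := (measurable_exponentialPDFReal r).ennreal_ofReal
  change ∫⁻ x, _ ∂volume.withDensity (exponentialPDF r) = _
  rw [lintegral_withDensity_eq_lintegral_mul _ hpdf (by fun_prop)]
  calc ∫⁻ x, exponentialPDF r x * ENNReal.ofReal (exp (t * x))
      = ∫⁻ x in Ioi 0, ENNReal.ofReal (r * exp ((t - r) * x)) := by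
        simp_rw [exponentialPDF_mul_ofReal_exp, lintegral_indicator measurableSet_Ici]
        exact setLIntegral_congr Ioi_ae_eq_Ici.symm
    _ = ENNReal.ofReal (r / (r - t)) := by
        rw [← ofReal_integral_eq_lintegral_ofReal hint (ae_of_all _ fun x ↦ by positivity),
          integral_const_mul, integral_exp_mul_Ioi hneg, mul_zero, exp_zero, ← neg_sub r t,
          div_neg, neg_div, neg_neg, mul_one_div]

lemma integrable_exp_mul_expMeasure {r t : ℝ} (hr : 0 < r) (ht : t < r) :
    Integrable (fun x ↦ exp (t * x)) (expMeasure r) := by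
  refine ⟨by fun_prop, ?_⟩
  rw [hasFiniteIntegral_iff_ofReal (ae_of_all _ fun x ↦ (exp_pos _).le),
    lintegral_exp_mul_expMeasure hr ht]
  exact ENNReal.ofReal_lt_top

lemma mgf_id_expMeasure {r t : ℝ} (hr : 0 < r) (ht : t < r) :
    mgf id (expMeasure r) t = r / (r - t) := by
  rw [mgf, integral_eq_lintegral_of_nonneg_ae (ae_of_all _ fun x ↦ (exp_pos _).le) (by fun_prop)]
  simp only [id]
  rw [lintegral_exp_mul_expMeasure hr ht, ENNReal.toReal_ofReal (div_nonneg hr.le (by linarith))]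

lemma expMeasure_Iic_zero (r : ℝ) : expMeasure r (Iic 0) = 0 := by
  change volume.withDensity (exponentialPDF r) (Iic 0) = 0
  rw [withDensity_apply _ measurableSet_Iic, setLIntegral_congr Iio_ae_eq_Iic.symm,
    lintegral_exponentialPDF_of_nonpos le_rfl]

lemma ae_pos_expMeasure (r : ℝ) : ∀ᵐ x ∂expMeasure r, 0 < x :=
  ae_iff.2 (by simp only [not_lt]; exact expMeasure_Iic_zero r)

section HasLaw

variable {Ω : Type*} {mΩ : MeasurableSpace Ω} {P : Measure Ω} {R : Ω → ℝ} {r t : ℝ}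

lemma HasLaw.mgf_of_expMeasure (hR : HasLaw R (expMeasure r) P) (hr : 0 < r) (ht : t < r) :
    mgf R P t = r / (r - t) := by
  rw [← mgf_id_map hR.aemeasurable, hR.map_eq, mgf_id_expMeasure hr ht]

lemma HasLaw.integrable_exp_mul_of_expMeasure (hR : HasLaw R (expMeasure r) P) (hr : 0 < r)
    (ht : t < r) : Integrable (fun ω ↦ exp (t * R ω)) P := by
  have h := integrable_exp_mul_expMeasure hr ht
  rw [← hR.map_eq] at h
  exact (integrable_map_measure (by fun_prop) hR.aemeasurable).1 h

lemma HasLaw.ae_pos_of_expMeasure (hR : HasLaw R (expMeasure r) P) : ∀ᵐ ω ∂P, 0 < R ω :=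
  (hR.ae_iff (measurableSet_setOfPred.1 measurableSet_Ioi)).2 (ae_pos_expMeasure r)

end HasLaw

lemma iIndepFun.measureReal_sum_mul_nonneg_le_prod_mgf {Ω ι : Type*} {mΩ : MeasurableSpace Ω}
    {P : Measure Ω} [Fintype ι] {R : ι → Ω → ℝ} (hindep : iIndepFun R P)
    (hmeas : ∀ i, Measurable (R i)) (c : ι → ℝ)
    (hint : ∀ i, Integrable (fun ω ↦ exp (c i * R i ω)) P) :
    P.real {ω | 0 ≤ ∑ i, c i * R i ω} ≤ ∏ i, mgf (R i) P (c i) := by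
  have := hindep.isProbabilityMeasure
  set S : ι → Ω → ℝ := fun i ω ↦ c i * R i ω with hS_def
  have hS : iIndepFun S P := hindep.comp (fun i x ↦ c i * x) fun i ↦ measurable_const_mul (c i)
  have hSmeas : ∀ i, Measurable (S i) := fun i ↦ (hmeas i).const_mul (c i)
  have hSint : Integrable (fun ω ↦ exp (1 * (∑ i, S i) ω)) P :=
    hS.integrable_exp_mul_sum hSmeas fun i _ ↦ by simpa only [one_mul] using hint i
  calc P.real {ω | 0 ≤ ∑ i, c i * R i ω} = P.real {ω | 0 ≤ (∑ i, S i) ω} := by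
        simp only [Finset.sum_apply, hS_def]
    _ ≤ exp (-1 * 0) * mgf (∑ i, S i) P 1 := measure_ge_le_exp_mul_mgf 0 zero_le_one hSint
    _ = ∏ i, mgf (R i) P (c i) := by
        rw [hS.mgf_sum hSmeas]
        simp only [hS_def, mgf_const_mul, mul_zero, exp_zero, one_mul, mul_one]

end ProbabilityTheory

section WeightedMean

variable {ι : Type*} [Fintype ι]

lemma sum_div_sum_mul_sub (w x : ι → ℝ) (a : ℝ) (hw : ∑ j, w j ≠ 0) :
    ∑ i, w i / (∑ j, w j) * x i - a = (∑ i, w i * (x i - a)) / ∑ j, w j := by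
  simp only [div_mul_eq_mul_div, ← Finset.sum_div, mul_sub, Finset.sum_sub_distrib,
    ← Finset.sum_mul]
  field_simp

lemma zero_le_sum_mul_of_le_wmean_of_wmean_le {w X Z : ι → ℝ} {μ B α β : ℝ}
    (hw : 0 < ∑ j, w j) (hα : 0 ≤ α) (hβ : 0 ≤ β)
    (hX : μ ≤ ∑ i, w i / (∑ j, w j) * X i) (hZ : ∑ i, w i / (∑ j, w j) * Z i ≤ B) :
    0 ≤ ∑ i, (α * (X i - μ) + β * (B - Z i)) * w i := by
  have hX' : 0 ≤ ∑ i, w i * (X i - μ) := by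
    have := sub_nonneg.2 hX
    rwa [sum_div_sum_mul_sub w X μ hw.ne', le_div_iff₀ hw, zero_mul] at this
  have hZ' : ∑ i, w i * (Z i - B) ≤ 0 := by
    have := sub_nonpos.2 hZ
    rwa [sum_div_sum_mul_sub w Z B hw.ne', div_le_iff₀ hw, zero_mul] at this
  calc 0 ≤ α * ∑ i, w i * (X i - μ) + β * -∑ i, w i * (Z i - B) := by
        have := mul_nonneg hα hX'
        have := mul_nonneg hβ (neg_nonneg.2 hZ')
        linarith
    _ = ∑ i, (α * (X i - μ) + β * (B - Z i)) * w i := by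
        rw [← Finset.sum_neg_distrib, Finset.mul_sum, Finset.mul_sum, ← Finset.sum_add_distrib]
        exact Finset.sum_congr rfl fun i _ ↦ by ring

end WeightedMean

lemma prod_one_div_eq_exp_neg_mul_mean_log {ι : Type*} [Fintype ι] [Nonempty ι] {a : ι → ℝ}
    (ha : ∀ i, 0 < a i) :
    ∏ i, 1 / a i = exp (-(Fintype.card ι : ℝ) * ((Fintype.card ι : ℝ)⁻¹ * ∑ i, log (a i))) := by
  rw [neg_mul, mul_inv_cancel_left₀ (by positivity), ← Finset.sum_neg_distrib, exp_sum]
  exact Finset.prod_congr rfl fun i _ ↦ by rw [exp_neg, exp_log (ha i), one_div]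

/-- Chernoff-type upper bound on the boundary crossing probability for Dirichlet
weights (realized as normalized i.i.d. `Exp(1)` variables): for fixed reals
`X_1, ..., X_{n+1}` and `Z_1, ..., Z_{n+1}`, and any `α, β ≥ 0` with
`1 - α(X_i - μ) - β(B - Z_i) > 0` for all `i`,
`P(∑ wᵢ Xᵢ ≥ μ ∧ ∑ wᵢ Zᵢ ≤ B) ≤ ∏ᵢ 1/(1 - α(Xᵢ - μ) - β(B - Zᵢ))`,
and the product equals `exp(-(n+1) E_{F_{n+1}}[log(1 - α(X - μ) - β(B - Z))])`. -/
theorem stmt6 {Ω : Type*} [MeasureSpace Ω] [IsProbabilityMeasure (ℙ : Measure Ω)]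
    (n : ℕ) (R : Fin (n + 1) → Ω → ℝ) (hmeas : ∀ i, Measurable (R i))
    (hiid : iIndepFun R ℙ)
    (hdist : ∀ i, Measure.map (R i) ℙ = ProbabilityTheory.expMeasure 1)
    (X Z : Fin (n + 1) → ℝ) (μ B α β : ℝ) (hα : 0 ≤ α) (hβ : 0 ≤ β)
    (hpos : ∀ i, 0 < 1 - α * (X i - μ) - β * (B - Z i)) :
    ℙ {ω | μ ≤ ∑ i, (R i ω / ∑ j, R j ω) * X i ∧
           ∑ i, (R i ω / ∑ j, R j ω) * Z i ≤ B}
        ≤ ENNReal.ofReal (∏ i, 1 / (1 - α * (X i - μ) - β * (B - Z i))) ∧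
      (∏ i, 1 / (1 - α * (X i - μ) - β * (B - Z i)))
        = exp (-((n : ℝ) + 1) *
            (((n : ℝ) + 1)⁻¹ * ∑ i, log (1 - α * (X i - μ) - β * (B - Z i)))) := by
  set c : Fin (n + 1) → ℝ := fun i ↦ α * (X i - μ) + β * (B - Z i) with hc_def
  have hc : ∀ i, c i < 1 := fun i ↦ by linarith [hpos i]
  have hlaw : ∀ i, HasLaw (R i) (expMeasure 1) := fun i ↦ ⟨(hmeas i).aemeasurable, hdist i⟩
  have hmgf : ∀ i, mgf (R i) ℙ (c i) = 1 / (1 - α * (X i - μ) - β * (B - Z i)) := fun i ↦ by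
    rw [(hlaw i).mgf_of_expMeasure one_pos (hc i), hc_def, sub_sub]
  have hevent : {ω | μ ≤ ∑ i, (R i ω / ∑ j, R j ω) * X i ∧ ∑ i, (R i ω / ∑ j, R j ω) * Z i ≤ B}
      ≤ᵐ[ℙ] {ω | 0 ≤ ∑ i, c i * R i ω} := by
    filter_upwards [ae_all_iff.2 fun i ↦ (hlaw i).ae_pos_of_expMeasure] with ω hω ⟨hX, hZ⟩
    exact zero_le_sum_mul_of_le_wmean_of_wmean_le
      (Finset.sum_pos (fun i _ ↦ hω i) Finset.univ_nonempty) hα hβ hX hZ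
  refine ⟨?_, by simpa using prod_one_div_eq_exp_neg_mul_mean_log hpos⟩
  calc _ ≤ ℙ {ω | 0 ≤ ∑ i, c i * R i ω} := measure_mono_ae hevent
    _ = ENNReal.ofReal ((ℙ : Measure Ω).real {ω | 0 ≤ ∑ i, c i * R i ω}) :=
        (ofReal_measureReal).symm
    _ ≤ ENNReal.ofReal (∏ i, mgf (R i) ℙ (c i)) := ENNReal.ofReal_le_ofReal <|
        hiid.measureReal_sum_mul_nonneg_le_prod_mgf hmeas c fun i ↦
          (hlaw i).integrable_exp_mul_of_expMeasure one_pos (hc i)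
    _ = _ := by simp_rw [hmgf]
end

section
/- Let h: ℝ⁺ → ℝ⁺ be convex with h(0) = 0, and B > 0, μ < h^{-1}(B). Then for any distribution F supported in [−h^{-1}(B), h^{-1}(B)] satisfying E_F[h(|X|)] ≤ B, the Kullback–Leibler divergence from F to the distribution (1/2)(F + δ_{h^{-1}(B)}) (the mixture of F and the point mass at h^{-1}(B)) is at most log 2, and this mixture has mean at least (μ_F + h^{-1}(B))/2. -/
open MeasureTheory Real
open scoped ENNReal

/-- Let `h : ℝ⁺ → ℝ⁺` be convex with `h 0 = 0`, `B > 0`, and `y = h⁻¹(B)`. For any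
distribution `F` supported in `[-y, y]` with `E_F[h(|X|)] ≤ B` and mean `μ_F`, the KL
divergence from `F` to the mixture `G = (1/2)(F + δ_y)` is at most `log 2`, and this
mixture has mean at least `(μ_F + y)/2`. -/
theorem stmt14 (h : ℝ → ℝ) (hconv : ConvexOn ℝ (Set.Ici 0) h)
    (hpos : ∀ x ≥ (0 : ℝ), 0 ≤ h x) (h0 : h 0 = 0)
    (B y μ μF : ℝ) (hB : 0 < B) (hy : 0 < y) (hyB : h y = B) (hμ : μ < y)
    (ν : Measure ℝ) [IsProbabilityMeasure ν]
    (hsupp : ∀ᵐ x ∂ν, x ∈ Set.Icc (-y) y)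
    (hmom : ∫ x, h |x| ∂ν ≤ B)
    (hmean : ∫ x, x ∂ν = μF) :
    (∫ x, Real.log ((ν.rnDeriv ((2 : ℝ≥0∞)⁻¹ • ν + (2 : ℝ≥0∞)⁻¹ • Measure.dirac y) x).toReal) ∂ν
        ≤ Real.log 2) ∧
      (μF + y) / 2 ≤ ∫ x, x ∂((2 : ℝ≥0∞)⁻¹ • ν + (2 : ℝ≥0∞)⁻¹ • Measure.dirac y) := by
  set G : Measure ℝ := (2 : ℝ≥0∞)⁻¹ • ν + (2 : ℝ≥0∞)⁻¹ • Measure.dirac y with hG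
  have hGfin : IsFiniteMeasure G := by
    constructor
    simp [hG, Measure.add_apply, Measure.smul_apply, smul_eq_mul]
  have h2G : (2 : ℝ≥0∞) • G = ν + Measure.dirac y := by
    rw [hG, smul_add, smul_smul, smul_smul,
      ENNReal.mul_inv_cancel (by norm_num) (by norm_num), one_smul, one_smul]
  have hle : ν ≤ (2 : ℝ≥0∞) • G := by
    rw [h2G]; exact Measure.le_add_right le_rfl
  have hac2 : (2 : ℝ≥0∞) • G ≪ G := Measure.smul_absolutelyContinuous
  have hacν : ν ≪ G := (Measure.absolutelyContinuous_of_le hle).trans hac2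
  have hGfin2 : IsFiniteMeasure ((2 : ℝ≥0∞) • G) := by
    constructor
    rw [h2G]
    simp [Measure.add_apply]
  have hbound : ∀ᵐ x ∂G, ν.rnDeriv G x ≤ 2 := by
    have h1 : ν.rnDeriv ((2 : ℝ≥0∞) • G) ≤ᵐ[(2 : ℝ≥0∞) • G] 1 :=
      Measure.rnDeriv_le_one_of_le hle
    have h1' : ν.rnDeriv ((2 : ℝ≥0∞) • G) ≤ᵐ[G] 1 := by
      have hacG2 : G ≪ (2 : ℝ≥0∞) • G := Measure.absolutelyContinuous_smul two_ne_zero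
      exact Filter.Eventually.filter_mono hacG2.ae_le h1
    have h2 : ν.rnDeriv ((2 : ℝ≥0∞) • G) =ᵐ[G] (2 : ℝ≥0∞)⁻¹ • ν.rnDeriv G :=
      Measure.rnDeriv_smul_right_of_ne_top ν G (by norm_num) (by norm_num)
    filter_upwards [h1', h2] with x hx1 hx2
    rw [hx2] at hx1
    simp only [Pi.smul_apply, smul_eq_mul, Pi.one_apply] at hx1
    calc ν.rnDeriv G x = 2 * (2⁻¹ * ν.rnDeriv G x) := by
          rw [← mul_assoc, ENNReal.mul_inv_cancel (by norm_num) (by norm_num), one_mul]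
      _ ≤ 2 * 1 := by exact mul_le_mul_right hx1 2
      _ = 2 := mul_one 2
  have hboundν : ∀ᵐ x ∂ν, ν.rnDeriv G x ≤ 2 := hacν.ae_le hbound
  constructor
  · -- KL part
    have hlog : ∀ᵐ x ∂ν, Real.log ((ν.rnDeriv G x).toReal) ≤ Real.log 2 := by
      filter_upwards [hboundν] with x hx
      rcases eq_or_ne ((ν.rnDeriv G x).toReal) 0 with h0' | h0'
      · rw [h0', Real.log_zero]; positivity
      · apply Real.log_le_log
        · rcases (ENNReal.toReal_nonneg (a := ν.rnDeriv G x)).lt_or_eq with hlt | heq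
          · exact hlt
          · exact absurd heq.symm h0'
        · have := ENNReal.toReal_mono (by norm_num) hx
          simpa using this
    by_cases hint : Integrable (fun x => Real.log ((ν.rnDeriv G x).toReal)) ν
    · calc ∫ x, Real.log ((ν.rnDeriv G x).toReal) ∂ν
          ≤ ∫ _, Real.log 2 ∂ν := integral_mono_ae hint (integrable_const _) hlog
        _ = Real.log 2 := by simp
    · rw [integral_undef hint]
      positivity
  · -- mean part
    have hintν : Integrable (fun x => x) ν := by
      refine (integrable_const y).mono' aestronglyMeasurable_id ?_
      filter_upwards [hsupp] with x hx
      rw [Real.norm_eq_abs, abs_le]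
      exact ⟨hx.1, hx.2⟩
    have hδ : Integrable (fun x : ℝ => x) (Measure.dirac y) :=
      ⟨aestronglyMeasurable_id, by simp [HasFiniteIntegral, lintegral_dirac]⟩
    rw [hG, integral_add_measure (hintν.smul_measure (by norm_num))
      (hδ.smul_measure (by norm_num)), integral_smul_measure, integral_smul_measure,
      integral_dirac, hmean]
    simp only [ENNReal.toReal_inv, ENNReal.toReal_ofNat, smul_eq_mul]
    ring_nf
    linarith
end

section
/- Given weights (w_1,...,w_{n+1}) in the open simplex (all w_i > 0, ∑ w_i = 1), observations X_1,...,X_n, a threshold μ* and parameters B, γ > 0, and a convex bijective-on-ℝ⁺ function h with h(0)=0: there exists x ≥ μ* with ∑_{i≤n} w_i X_i + w_{n+1} x ≥ μ* and ∑_{i≤n} w_i h(|X_i − μ*|) + w_{n+1}(h(x − μ*) − γ) ≤ B if and only if h( max{0, (1/w_{n+1}) ∑_{i≤n} w_i (μ* − X_i)} ) ≤ B + γ + (1/w_{n+1}) ∑_{i≤n} w_i (B − h(|X_i − μ*|)). -/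
open Finset

theorem sum_castSucc_mul_sub_of_sum_eq_one {n : ℕ} {w : Fin (n + 1) → ℝ} (hsum : ∑ i, w i = 1)
    (c : ℝ) (g : Fin n → ℝ) :
    ∑ i : Fin n, w i.castSucc * (c - g i)
      = (1 - w (Fin.last n)) * c - ∑ i : Fin n, w i.castSucc * g i := by
  have hinit : ∑ i : Fin n, w i.castSucc = 1 - w (Fin.last n) := by
    rw [← hsum, Fin.sum_univ_castSucc]; ring
  simp only [mul_sub, sum_sub_distrib, ← sum_mul, hinit]

/-- The least admissible `x` is `t + max 0 (a / c)`, and monotonicity of `f` makes it optimal. -/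
theorem exists_ge_and_le_iff_of_monotoneOn {f : ℝ → ℝ} (hf : MonotoneOn f (Set.Ici 0))
    {c : ℝ} (hc : 0 < c) (t a D : ℝ) :
    (∃ x ≥ t, a ≤ c * (x - t) ∧ f (x - t) ≤ D) ↔ f (max 0 (c⁻¹ * a)) ≤ D := by
  have hadmissible : ∀ y, (0 ≤ y ∧ a ≤ c * y) ↔ max 0 (c⁻¹ * a) ≤ y := fun y => by
    rw [max_le_iff, inv_mul_le_iff₀ hc]
  constructor
  · rintro ⟨x, hxt, hax, hfx⟩
    have hmin := (hadmissible (x - t)).1 ⟨sub_nonneg.2 hxt, hax⟩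
    exact (hf (Set.mem_Ici.2 (le_max_left _ _)) (sub_nonneg.2 hxt) hmin).trans hfx
  · intro hD
    refine ⟨t + max 0 (c⁻¹ * a), le_add_of_nonneg_right (le_max_left _ _), ?_⟩
    rw [add_sub_cancel_left]
    exact ⟨((hadmissible _).2 le_rfl).2, hD⟩

theorem stmt18_general (n : ℕ) (w : Fin (n + 1) → ℝ) (hw : ∀ i, 0 < w i)
    (hsum : ∑ i, w i = 1)
    (X : Fin n → ℝ) (μs B γ : ℝ)
    (h : ℝ → ℝ)
    (hmono : StrictMonoOn h (Set.Ici 0)) :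
    (∃ x ≥ μs,
        μs ≤ ∑ i, w i.castSucc * X i + w (Fin.last n) * x ∧
        ∑ i, w i.castSucc * h |X i - μs| + w (Fin.last n) * (h (x - μs) - γ) ≤ B)
      ↔ h (max 0 ((w (Fin.last n))⁻¹ * ∑ i, w i.castSucc * (μs - X i)))
          ≤ B + γ + (w (Fin.last n))⁻¹ * ∑ i, w i.castSucc * (B - h |X i - μs|) := by
  set wl := w (Fin.last n)
  have hwl : 0 < wl := hw _
  have hmean : ∀ x, μs ≤ ∑ i, w i.castSucc * X i + wl * x
      ↔ ∑ i, w i.castSucc * (μs - X i) ≤ wl * (x - μs) := fun x => by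
    rw [sum_castSucc_mul_sub_of_sum_eq_one hsum]
    constructor <;> intro <;> linarith
  have hbudget : ∀ x, ∑ i, w i.castSucc * h |X i - μs| + wl * (h (x - μs) - γ) ≤ B
      ↔ h (x - μs) ≤ B + γ + wl⁻¹ * ∑ i, w i.castSucc * (B - h |X i - μs|) := fun x => by
    rw [sum_castSucc_mul_sub_of_sum_eq_one hsum]
    set T := ∑ i, w i.castSucc * h |X i - μs|
    have hbound : B + γ + wl⁻¹ * ((1 - wl) * B - T) = γ + (B - T) / wl := by
      field_simp; ring
    rw [hbound, ← sub_le_iff_le_add', le_div_iff₀ hwl]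
    constructor <;> intro <;> linarith
  simp_rw [hmean, hbudget]
  exact exists_ge_and_le_iff_of_monotoneOn hmono.monotoneOn hwl _ _ _

/-- Closed-form equivalence of the `h`-NPTS acceptance criterion: for weights in the
open simplex, observations `X_1,...,X_n`, threshold `μ*` and parameters `B, γ > 0`,
there exists `x ≥ μ*` with `∑_{i≤n} wᵢXᵢ + w_{n+1}x ≥ μ*` and
`∑_{i≤n} wᵢ h(|Xᵢ - μ*|) + w_{n+1}(h(x - μ*) - γ) ≤ B` if and only if
`h(max{0, (1/w_{n+1}) ∑ᵢ wᵢ(μ* - Xᵢ)}) ≤ B + γ + (1/w_{n+1}) ∑ᵢ wᵢ(B - h(|Xᵢ - μ*|))`. -/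
theorem stmt18 (n : ℕ) (w : Fin (n + 1) → ℝ) (hw : ∀ i, 0 < w i)
    (hsum : ∑ i, w i = 1)
    (X : Fin n → ℝ) (μs B γ : ℝ) (hγ : 0 < γ)
    (h : ℝ → ℝ) (h0 : h 0 = 0) (hconv : ConvexOn ℝ (Set.Ici 0) h)
    (hmono : StrictMonoOn h (Set.Ici 0)) (hpos : ∀ x ≥ (0 : ℝ), 0 ≤ h x)
    (hcont : ContinuousOn h (Set.Ici 0)) :
    (∃ x ≥ μs,
        μs ≤ ∑ i, w i.castSucc * X i + w (Fin.last n) * x ∧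
        ∑ i, w i.castSucc * h |X i - μs| + w (Fin.last n) * (h (x - μs) - γ) ≤ B)
      ↔ h (max 0 ((w (Fin.last n))⁻¹ * ∑ i, w i.castSucc * (μs - X i)))
          ≤ B + γ + (w (Fin.last n))⁻¹ * ∑ i, w i.castSucc * (B - h |X i - μs|) :=
  stmt18_general n w hw hsum X μs B γ h hmono
end
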